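/- Let L > 0 and let v be a C^2 solution of ∂_t^2 v − ∂_s^2 v = F on [0,L) × R, with odd initial data v₀, v₁ and odd forcing F(t,·), such that: v₀(s) = s·u₀(|s|) with u₀ ≥ 0 on (0,L) and r ↦ r u₀(r) nondecreasing on (0,L); v₁(s) = s·u₁(|s|) with u₁ ≥ 0 on (0,L); and F(t,s) = s·f(t,|s|) with f(t,r) ≥ 0 for 0 < r < L − t. Then v(t,s) ≥ 0 for all 0 < t < L and 0 < s < L − t. -/

import Mathlib

/-!
The wave operator factors as `∂ₜ² − ∂ₛ² = (∂ₜ − ∂ₛ)(∂ₜ + ∂ₛ)`. Along a forward characteristic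
`τ ↦ (τ, c + τ)` the derivative of `g` is `(∂ₜ + ∂ₛ) g`, and along the backward characteristic
`σ ↦ (σ, x − σ)` the derivative of `(∂ₜ + ∂ₛ) g` is `(∂ₜ² − ∂ₛ²) g`. So if `(∂ₜ + ∂ₛ) g ≥ 0` on the
initial line and the forcing is nonnegative in the characteristic triangle, `g` increases along
forward characteristics; this is the positivity of the three terms of d'Alembert's formula, read
off without integrating.

For the solution `v`, the initial value of `(∂ₜ + ∂ₛ) v` at `s > 0` is `s u₁(s) + (s u₀(s))' ≥ 0`.
Following the characteristic through `(t, s)` backwards, it meets either `t = 0`, where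
`v = s u₀(s) ≥ 0`, or the axis `s = 0`. There `v` vanishes: `v(t, s) + v(t, −s)` has vanishing data
and forcing, so it is constant along characteristics (apply the monotonicity to it and to its
negative).
-/

open Set Function

section Line

variable {E F : Type*} [NormedAddCommGroup E] [NormedSpace ℝ E] [NormedAddCommGroup F]
  [NormedSpace ℝ F] {G : E → F} {z w : E}

theorem hasDerivAt_comp_add_smul {t : ℝ} (hG : DifferentiableAt ℝ G (z + t • w)) :
    HasDerivAt (fun τ : ℝ => G (z + τ • w)) (fderiv ℝ G (z + t • w) w) t := by
  have hline : HasDerivAt (fun τ : ℝ => z + τ • w) w t := by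
    simpa using ((hasDerivAt_id t).smul_const w).const_add z
  exact hG.hasFDerivAt.comp_hasDerivAt t hline

theorem hasDerivAt_fderiv_comp_add_smul (hG : ContDiff ℝ 2 G) (u : E) (t : ℝ) :
    HasDerivAt (fun τ : ℝ => fderiv ℝ G (z + τ • w) u)
      (fderiv ℝ (fderiv ℝ G) (z + t • w) w u) t :=
  (hasDerivAt_comp_add_smul ((hG.fderiv_right one_add_one_eq_two.le).differentiable
    one_ne_zero _)).clm_apply (hasDerivAt_const t u) |>.congr_deriv (by simp)

theorem deriv_deriv_comp_add_smul (hG : ContDiff ℝ 2 G) (t : ℝ) :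
    deriv (fun τ => deriv (fun τ' => G (z + τ' • w)) τ) t
      = fderiv ℝ (fderiv ℝ G) (z + t • w) w w := by
  have hfirst : (fun τ => deriv (fun τ' => G (z + τ' • w)) τ)
      = fun τ => fderiv ℝ G (z + τ • w) w :=
    funext fun τ => (hasDerivAt_comp_add_smul (hG.differentiable two_ne_zero _)).deriv
  rw [hfirst, (hasDerivAt_fderiv_comp_add_smul hG w t).deriv]

end Line

noncomputable def waveOp (g : ℝ → ℝ → ℝ) (t s : ℝ) : ℝ :=
  deriv (fun τ => deriv (fun τ' => g τ' s) τ) t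
    - deriv (fun σ => deriv (fun σ' => g t σ') σ) s

noncomputable def charDeriv (g : ℝ → ℝ → ℝ) (t s : ℝ) : ℝ :=
  deriv (fun τ => g τ s) t + deriv (fun σ => g t σ) s

theorem charDeriv_neg (g : ℝ → ℝ → ℝ) (t s : ℝ) :
    charDeriv (fun t s => -g t s) t s = -charDeriv g t s := by
  simp only [charDeriv, deriv.fun_neg, neg_add]

theorem waveOp_neg (g : ℝ → ℝ → ℝ) (t s : ℝ) :
    waveOp (fun t s => -g t s) t s = -waveOp g t s := by
  simp only [waveOp, deriv.fun_neg, neg_sub_neg, neg_sub]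

theorem waveOp_comp_neg (g : ℝ → ℝ → ℝ) (t s : ℝ) :
    waveOp (fun t s => g t (-s)) t s = waveOp g t (-s) := by
  simp only [waveOp, deriv_comp_neg, deriv.fun_neg, neg_neg]

section Curried

variable {g : ℝ → ℝ → ℝ}

theorem hasDerivAt_time (hg : Differentiable ℝ (uncurry g)) (t s : ℝ) :
    HasDerivAt (fun τ => g τ s) (fderiv ℝ (uncurry g) (t, s) (1, 0)) t := by
  simpa using hasDerivAt_comp_add_smul (z := ((0 : ℝ), s)) (w := ((1 : ℝ), (0 : ℝ))) (hg _)

theorem hasDerivAt_space (hg : Differentiable ℝ (uncurry g)) (t s : ℝ) :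
    HasDerivAt (fun σ => g t σ) (fderiv ℝ (uncurry g) (t, s) (0, 1)) s := by
  simpa using hasDerivAt_comp_add_smul (z := (t, (0 : ℝ))) (w := ((0 : ℝ), (1 : ℝ))) (hg _)

theorem deriv_deriv_time (hg : ContDiff ℝ 2 (uncurry g)) (t s : ℝ) :
    deriv (fun τ => deriv (fun τ' => g τ' s) τ) t
      = fderiv ℝ (fderiv ℝ (uncurry g)) (t, s) (1, 0) (1, 0) := by
  simpa using deriv_deriv_comp_add_smul (z := ((0 : ℝ), s)) (w := ((1 : ℝ), (0 : ℝ))) hg t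

theorem deriv_deriv_space (hg : ContDiff ℝ 2 (uncurry g)) (t s : ℝ) :
    deriv (fun σ => deriv (fun σ' => g t σ') σ) s
      = fderiv ℝ (fderiv ℝ (uncurry g)) (t, s) (0, 1) (0, 1) := by
  simpa using deriv_deriv_comp_add_smul (z := (t, (0 : ℝ))) (w := ((0 : ℝ), (1 : ℝ))) hg s

theorem charDeriv_eq_fderiv (hg : Differentiable ℝ (uncurry g)) (t s : ℝ) :
    charDeriv g t s = fderiv ℝ (uncurry g) (t, s) (1, 1) := by
  rw [charDeriv, (hasDerivAt_time hg t s).deriv, (hasDerivAt_space hg t s).deriv, ← map_add,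
    Prod.mk_add_mk, add_zero, zero_add]

theorem waveOp_eq_fderiv_fderiv (hg : ContDiff ℝ 2 (uncurry g)) (t s : ℝ) :
    waveOp g t s = fderiv ℝ (fderiv ℝ (uncurry g)) (t, s) (1, -1) (1, 1) := by
  have hsymm := hg.contDiffAt.isSymmSndFDerivAt (x := (t, s)) (by simp)
  have h1 : ((1 : ℝ), (-1 : ℝ)) = (1, 0) - (0, 1) := by simp
  have h2 : ((1 : ℝ), (1 : ℝ)) = (1, 0) + (0, 1) := by simp
  rw [waveOp, deriv_deriv_time hg, deriv_deriv_space hg, h1, h2]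
  simp only [map_sub, map_add, sub_apply, hsymm (0, 1) (1, 0)]
  ring

theorem waveOp_add {h : ℝ → ℝ → ℝ} (hg : ContDiff ℝ 2 (uncurry g))
    (hh : ContDiff ℝ 2 (uncurry h)) (t s : ℝ) :
    waveOp (fun t s => g t s + h t s) t s = waveOp g t s + waveOp h t s := by
  have hD : fderiv ℝ (uncurry g + uncurry h) = fderiv ℝ (uncurry g) + fderiv ℝ (uncurry h) :=
    funext fun z => fderiv_add (hg.differentiable two_ne_zero z) (hh.differentiable two_ne_zero z)
  have hD2 := fderiv_add (x := (t, s))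
    ((hg.fderiv_right one_add_one_eq_two.le).differentiable one_ne_zero _)
    ((hh.fderiv_right one_add_one_eq_two.le).differentiable one_ne_zero _)
  rw [waveOp_eq_fderiv_fderiv (g := fun t s => g t s + h t s) (hg.add hh),
    waveOp_eq_fderiv_fderiv hg, waveOp_eq_fderiv_fderiv hh]
  change fderiv ℝ (fderiv ℝ (uncurry g + uncurry h)) (t, s) _ _ = _
  rw [hD, hD2]
  rfl

theorem hasDerivAt_comp_char (hg : Differentiable ℝ (uncurry g)) (c t : ℝ) :
    HasDerivAt (fun τ => g τ (c + τ)) (charDeriv g t (c + t)) t := by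
  rw [charDeriv_eq_fderiv hg]
  simpa [add_comm] using
    hasDerivAt_comp_add_smul (z := ((0 : ℝ), c)) (w := ((1 : ℝ), (1 : ℝ))) (hg _)

theorem hasDerivAt_charDeriv_comp (hg : ContDiff ℝ 2 (uncurry g)) (x σ : ℝ) :
    HasDerivAt (fun σ => charDeriv g σ (x - σ)) (waveOp g σ (x - σ)) σ := by
  have hC1 : Differentiable ℝ (uncurry g) := hg.differentiable two_ne_zero
  simp only [charDeriv_eq_fderiv hC1, waveOp_eq_fderiv_fderiv hg]
  simpa [sub_eq_add_neg] using
    hasDerivAt_fderiv_comp_add_smul (z := ((0 : ℝ), x)) (w := ((1 : ℝ), (-1 : ℝ))) hg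
      (1, 1) σ

theorem monotoneOn_charDeriv_comp (hg : ContDiff ℝ 2 (uncurry g)) {x p q : ℝ}
    (hwave : ∀ σ ∈ Ioo p q, 0 ≤ waveOp g σ (x - σ)) :
    MonotoneOn (fun σ => charDeriv g σ (x - σ)) (Icc p q) := by
  have hd := hasDerivAt_charDeriv_comp hg x
  refine monotoneOn_of_hasDerivWithinAt_nonneg (convex_Icc p q)
    (fun σ _ => (hd σ).continuousAt.continuousWithinAt) (fun σ _ => (hd σ).hasDerivWithinAt) ?_
  simpa only [interior_Icc] using hwave

/-- `(σ, c + 2τ − σ)`, `0 < σ < τ`, is the backward characteristic from `(τ, c + τ)`. -/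
theorem monotoneOn_comp_char (hg : ContDiff ℝ 2 (uncurry g)) {a T c : ℝ} (ha : 0 ≤ a)
    (hdata : ∀ τ ∈ Ioo a T, 0 ≤ charDeriv g 0 (c + 2 * τ))
    (hwave : ∀ τ ∈ Ioo a T, ∀ σ ∈ Ioo 0 τ, 0 ≤ waveOp g σ (c + 2 * τ - σ)) :
    MonotoneOn (fun τ => g τ (c + τ)) (Icc a T) := by
  have hd := hasDerivAt_comp_char (hg.differentiable two_ne_zero) c
  refine monotoneOn_of_hasDerivWithinAt_nonneg (convex_Icc a T)
    (fun τ _ => (hd τ).continuousAt.continuousWithinAt) (fun τ _ => (hd τ).hasDerivWithinAt) ?_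
  rintro τ hτ
  rw [interior_Icc] at hτ
  have hτ0 : 0 ≤ τ := ha.trans hτ.1.le
  calc 0 ≤ charDeriv g 0 (c + 2 * τ - 0) := by simpa using hdata τ hτ
    _ ≤ charDeriv g τ (c + 2 * τ - τ) :=
      monotoneOn_charDeriv_comp hg (hwave τ hτ) (left_mem_Icc.2 hτ0) (right_mem_Icc.2 hτ0) hτ0
    _ = charDeriv g τ (c + τ) := by ring_nf

theorem eq_of_waveOp_eq_zero (hg : ContDiff ℝ 2 (uncurry g)) {a T c : ℝ} (ha : 0 ≤ a)
    (haT : a ≤ T) (hdata : ∀ τ ∈ Ioo a T, charDeriv g 0 (c + 2 * τ) = 0)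
    (hwave : ∀ τ ∈ Ioo a T, ∀ σ ∈ Ioo 0 τ, waveOp g σ (c + 2 * τ - σ) = 0) :
    g a (c + a) = g T (c + T) := by
  have hmono := monotoneOn_comp_char hg ha (fun τ hτ => (hdata τ hτ).ge)
    (fun τ hτ σ hσ => (hwave τ hτ σ hσ).ge)
  have hanti := monotoneOn_comp_char (g := fun t s => -g t s) hg.neg ha
    (fun τ hτ => by rw [charDeriv_neg, hdata τ hτ, neg_zero])
    (fun τ hτ σ hσ => by rw [waveOp_neg, hwave τ hτ σ hσ, neg_zero])
  have haT' := left_mem_Icc.2 haT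
  have hTT := right_mem_Icc.2 haT
  exact le_antisymm (hmono haT' hTT haT) (neg_le_neg_iff.1 (hanti haT' hTT haT))

theorem apply_zero_eq_zero_of_odd (hg : ContDiff ℝ 2 (uncurry g)) {T : ℝ} (hT : 0 ≤ T)
    (h0 : ∀ x, g 0 (-x) = -g 0 x)
    (h1 : ∀ x, deriv (fun τ => g τ (-x)) 0 = -deriv (fun τ => g τ x) 0)
    (hwave : ∀ σ ∈ Ioo 0 T, ∀ x, waveOp g σ (-x) = -waveOp g σ x) :
    g T 0 = 0 := by
  have hC1 : Differentiable ℝ (uncurry g) := hg.differentiable two_ne_zero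
  have hrefl : ContDiff ℝ 2 (uncurry fun t s => g t (-s)) :=
    hg.comp (contDiff_fst.prodMk contDiff_snd.neg)
  have hdata (y : ℝ) : charDeriv (fun t s => g t s + g t (-s)) 0 y = 0 := by
    have hinit : (fun s => g 0 s + g 0 (-s)) = fun _ => 0 :=
      funext fun s => by rw [h0, add_neg_cancel]
    rw [charDeriv, hinit, deriv_const, add_zero,
      deriv_fun_add (hasDerivAt_time hC1 0 y).differentiableAt
        (hasDerivAt_time hC1 0 (-y)).differentiableAt, h1, add_neg_cancel]
  have hwaveE (σ : ℝ) (hσ : σ ∈ Ioo 0 T) (x : ℝ) :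
      waveOp (fun t s => g t s + g t (-s)) σ x = 0 := by
    rw [waveOp_add hg hrefl, waveOp_comp_neg, hwave σ hσ, add_neg_cancel]
  have hchar := eq_of_waveOp_eq_zero (g := fun t s => g t s + g t (-s)) (c := -T)
    (hg.add hrefl) le_rfl hT (fun τ _ => hdata _)
    (fun τ hτ σ hσ => hwaveE σ ⟨hσ.1, hσ.2.trans hτ.2⟩ _)
  simp only [add_zero, neg_add_cancel, neg_zero, h0, add_neg_cancel] at hchar
  linarith

end Curried

theorem mul_apply_abs_nonneg {φ : ℝ → ℝ} {x b : ℝ} (hx : 0 ≤ x) (hxb : x < b)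
    (hφ : ∀ r, 0 < r → r < b → 0 ≤ φ r) : 0 ≤ x * φ |x| := by
  rcases hx.eq_or_lt with rfl | hpos
  · rw [zero_mul]
  · exact mul_nonneg hx (hφ _ (abs_pos.2 hpos.ne') ((abs_of_pos hpos).symm ▸ hxb))

theorem charDeriv_zero_nonneg {g : ℝ → ℝ → ℝ} {u₀ u₁ : ℝ → ℝ} {L y : ℝ}
    (h0 : ∀ s, g 0 s = s * u₀ |s|) (h1 : ∀ s, deriv (fun τ => g τ s) 0 = s * u₁ |s|)
    (hu₀mono : MonotoneOn (fun r => r * u₀ r) (Ioo 0 L))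
    (hu₁pos : ∀ r, 0 < r → r < L → 0 ≤ u₁ r) (hy : y ∈ Ioo 0 L) :
    0 ≤ charDeriv g 0 y := by
  have hmono : MonotoneOn (g 0) (Ioo 0 L) :=
    hu₀mono.congr fun r hr => by rw [h0, abs_of_pos hr.1]
  refine add_nonneg (h1 y ▸ mul_apply_abs_nonneg hy.1.le hy.2 hu₁pos) ?_
  rw [← derivWithin_of_isOpen isOpen_Ioo hy]
  exact hmono.derivWithin_nonneg

theorem positivity_lemma_general (L : ℝ)
    (v : ℝ → ℝ → ℝ) (u₀ u₁ : ℝ → ℝ) (f : ℝ → ℝ → ℝ)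
    (hv : ContDiff ℝ 2 (Function.uncurry v))
    (hwave : ∀ t s : ℝ, 0 ≤ t → t < L →
      deriv (fun τ => deriv (fun τ' => v τ' s) τ) t
        - deriv (fun σ => deriv (fun σ' => v t σ') σ) s = s * f t |s|)
    (h0 : ∀ s : ℝ, v 0 s = s * u₀ |s|)
    (h1 : ∀ s : ℝ, deriv (fun τ => v τ s) 0 = s * u₁ |s|)
    (hu₀pos : ∀ r : ℝ, 0 < r → r < L → 0 ≤ u₀ r)
    (hu₀mono : MonotoneOn (fun r => r * u₀ r) (Set.Ioo 0 L))
    (hu₁pos : ∀ r : ℝ, 0 < r → r < L → 0 ≤ u₁ r)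
    (hf : ∀ t r : ℝ, 0 < t → t < L → 0 < r → r < L - t → 0 ≤ f t r) :
    ∀ t s : ℝ, 0 < t → t < L → 0 < s → s < L - t → 0 ≤ v t s := by
  have hwaveOp (σ x : ℝ) (hσ : σ ∈ Ico 0 L) : waveOp v σ x = x * f σ |x| :=
    hwave σ x hσ.1 hσ.2
  have haxis (a : ℝ) (ha : a ∈ Ico 0 L) : v a 0 = 0 := by
    refine apply_zero_eq_zero_of_odd hv ha.1 (fun x => ?_) (fun x => ?_) (fun σ hσ x => ?_)
    · rw [h0, h0, abs_neg, neg_mul]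
    · rw [h1, h1, abs_neg, neg_mul]
    · have hσL : σ ∈ Ico 0 L := ⟨hσ.1.le, hσ.2.trans ha.2⟩
      rw [hwaveOp σ _ hσL, hwaveOp σ _ hσL, abs_neg, neg_mul]
  intro t s ht htL hs hsL
  have hcone (a : ℝ) (ha : 0 ≤ a) (hat : a ≤ t) (hsa : 0 ≤ s - t + a) :
      v a (s - t + a) ≤ v t s := by
    have hchar := monotoneOn_comp_char (c := s - t) hv ha
      (fun τ hτ => charDeriv_zero_nonneg h0 h1 hu₀mono hu₁pos
        ⟨by linarith [hτ.1], by linarith [hτ.2]⟩)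
      (fun τ hτ σ hσ => by
        rw [hwaveOp σ _ ⟨hσ.1.le, by linarith [hσ.2, hτ.2]⟩]
        exact mul_apply_abs_nonneg (by linarith [hσ.2, hτ.1]) (by linarith [hτ.2])
          (hf σ · hσ.1 (by linarith [hσ.2, hτ.2])))
      (left_mem_Icc.2 hat) (right_mem_Icc.2 hat) hat
    simpa using hchar
  rcases le_total t s with hts | hst
  · refine le_trans ?_ (hcone 0 le_rfl ht.le (by linarith))
    rw [add_zero, h0]
    exact mul_apply_abs_nonneg (by linarith) (by linarith) hu₀pos
  · simpa [haxis (t - s) ⟨by linarith, by linarith⟩] using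
      hcone (t - s) (by linarith) (by linarith) (by linarith)

/-- Positivity lemma for the 1D reduction of the radial 3D linear wave equation:
a `C²` solution of `∂_t²v − ∂_s²v = F` with odd nonnegative data and forcing
(in the sense below) is nonnegative inside the light cone `{0 < s < L − t}`. -/
theorem positivity_lemma (L : ℝ) (hL : 0 < L)
    (v : ℝ → ℝ → ℝ) (u₀ u₁ : ℝ → ℝ) (f : ℝ → ℝ → ℝ)
    (hv : ContDiff ℝ 2 (Function.uncurry v))
    (hwave : ∀ t s : ℝ, 0 ≤ t → t < L →
      deriv (fun τ => deriv (fun τ' => v τ' s) τ) t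
        - deriv (fun σ => deriv (fun σ' => v t σ') σ) s = s * f t |s|)
    (h0 : ∀ s : ℝ, v 0 s = s * u₀ |s|)
    (h1 : ∀ s : ℝ, deriv (fun τ => v τ s) 0 = s * u₁ |s|)
    (hu₀pos : ∀ r : ℝ, 0 < r → r < L → 0 ≤ u₀ r)
    (hu₀mono : MonotoneOn (fun r => r * u₀ r) (Set.Ioo 0 L))
    (hu₁pos : ∀ r : ℝ, 0 < r → r < L → 0 ≤ u₁ r)
    (hf : ∀ t r : ℝ, 0 < t → t < L → 0 < r → r < L - t → 0 ≤ f t r) :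
    ∀ t s : ℝ, 0 < t → t < L → 0 < s → s < L - t → 0 ≤ v t s :=
  positivity_lemma_general L v u₀ u₁ f hv hwave h0 h1 hu₀pos hu₀mono hu₁pos hf
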